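/- Let u = (u_1,…,u_m) be a vector of nonnegative reals in descending order with Σ_k u_k ≥ 1, and let R = {v ∈ ℝ^m : Σ_k v_k = 1, 0 ≤ v_k ≤ u_k for all k}. Let M be the largest integer with Σ_{l=1}^M u_l ≤ 1 and define v̂ by v̂_k = u_k for k ≤ M, v̂_{M+1} = 1 − Σ_{l=1}^M u_l, and v̂_k = 0 for k > M+1. Then v̂ ∈ R, v̂ is in descending order, and v̂ is the majorization join of R, i.e., v ≺ v̂ for all v ∈ R and v̂ ≺ c̃ for every probability vector c̃ majorizing all of R. Consequently, for every Schur-concave function g, min_{v∈R} g(v) = g(v̂); in particular min_{v∈R} Σ_k √v_k = Σ_k √v̂_k. -/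

import Mathlib

open Matrix Finset ComplexOrder

/-- The vector `x` sorted in descending order. -/
noncomputable def sortDesc {n : ℕ} (x : Fin n → ℝ) : Fin n → ℝ :=
  fun i => x (Tuple.sort x i.rev)

/-- The sum of the `k` largest entries of `x`. -/
noncomputable def topSum {n : ℕ} (x : Fin n → ℝ) (k : ℕ) : ℝ :=
  ∑ i ∈ Finset.univ.filter (fun i : Fin n => (i : ℕ) < k), sortDesc x i

/-- `Maj b a` means `b ≺ a`, i.e. `a` majorizes `b`. -/
def Maj {n : ℕ} (b a : Fin n → ℝ) : Prop := ∀ k : ℕ, topSum b k ≤ topSum a k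

/-- `p` is a probability vector. -/
def IsProbVec {n : ℕ} (p : Fin n → ℝ) : Prop := (∀ i, 0 ≤ p i) ∧ ∑ i, p i = 1

/-- Shannon entropy (base 2). -/
noncomputable def shannon {ι : Type*} [Fintype ι] (p : ι → ℝ) : ℝ :=
  -∑ i, p i * Real.logb 2 (p i)

/-- A von Neumann measurement: an orthonormal basis of `ℂⁿ`. -/
def IsONB {n : ℕ} (ψ : Fin n → (Fin n → ℂ)) : Prop :=
  ∀ i j, star (ψ i) ⬝ᵥ ψ j = if i = j then 1 else 0

/-- Outcome distribution of the measurement `ψ` on the state `ρ`. -/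
noncomputable def outcome {n : ℕ} (ρ : Matrix (Fin n) (Fin n) ℂ)
    (ψ : Fin n → (Fin n → ℂ)) : Fin n → ℝ :=
  fun i => (star (ψ i) ⬝ᵥ (ρ *ᵥ ψ i)).re

/-- Vector of diagonal entries of `ρ` (real parts). -/
noncomputable def diagVec {n : ℕ} (ρ : Matrix (Fin n) (Fin n) ℂ) : Fin n → ℝ :=
  fun i => (ρ i i).re

/-- `c` is the majorization join of `a` and `b`. -/
def IsMajJoin {n : ℕ} (a b c : Fin n → ℝ) : Prop :=
  IsProbVec c ∧ Maj a c ∧ Maj b c ∧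
    ∀ c', IsProbVec c' → Maj a c' → Maj b c' → Maj c c'

/-- `c` is the majorization meet of the set `X`. -/
def IsMajMeet {n : ℕ} (X : Set (Fin n → ℝ)) (c : Fin n → ℝ) : Prop :=
  IsProbVec c ∧ (∀ p ∈ X, Maj c p) ∧
    ∀ c', IsProbVec c' → (∀ p ∈ X, Maj c' p) → Maj c' c



section Aux

open Finset

lemma sortDesc_antitone' {n : ℕ} (x : Fin n → ℝ) : Antitone (sortDesc x) := by
  intro i j hij
  exact Tuple.monotone_sort x (Fin.rev_le_rev.mpr hij)

lemma sortDesc_eq_self' {n : ℕ} {x : Fin n → ℝ} (hx : Antitone x) : sortDesc x = x := by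
  have h : x ∘ (Fin.revPerm : Equiv.Perm (Fin n)) = x ∘ Tuple.sort x :=
    Tuple.comp_sort_eq_comp_iff_monotone.mpr (fun i j hij => hx (Fin.rev_le_rev.mpr hij))
  funext i
  have := congrFun h.symm i.rev
  simpa [sortDesc, Fin.rev_rev] using this

lemma topSum_of_antitone {n : ℕ} {x : Fin n → ℝ} (hx : Antitone x) (k : ℕ) :
    topSum x k = ∑ i ∈ Finset.univ.filter (fun i : Fin n => (i : ℕ) < k), x i := by
  rw [topSum, sortDesc_eq_self' hx]

lemma sum_comp_sortDesc {n : ℕ} (x : Fin n → ℝ) (f : ℝ → ℝ) :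
    ∑ i, f (sortDesc x i) = ∑ i, f (x i) :=
  Equiv.sum_comp (Fin.revPerm.trans (Tuple.sort x)) (fun j => f (x j))

noncomputable def extZ {m : ℕ} (x : Fin m → ℝ) : ℕ → ℝ :=
  fun i => if h : i < m then x ⟨i, h⟩ else 0

lemma image_filter_lt (m k : ℕ) :
    ((Finset.univ.filter (fun i : Fin m => (i:ℕ) < k)).image Fin.val) = Finset.range (min k m) := by
  ext i
  simp only [Finset.mem_image, Finset.mem_filter, Finset.mem_univ, true_and, Finset.mem_range,
    Nat.lt_min]
  constructor
  · rintro ⟨j, hj, rfl⟩; exact ⟨hj, j.isLt⟩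
  · rintro ⟨h1, h2⟩; exact ⟨⟨i, h2⟩, h1, rfl⟩

lemma psum_eq {m : ℕ} (x : Fin m → ℝ) (k : ℕ) :
    ∑ i ∈ Finset.univ.filter (fun i : Fin m => (i:ℕ) < k), x i
      = ∑ i ∈ Finset.range k, extZ x i := by
  classical
  have h1 : ∑ j ∈ (Finset.univ.filter (fun i : Fin m => (i:ℕ) < k)).image Fin.val, extZ x j
      = ∑ i ∈ Finset.univ.filter (fun i : Fin m => (i:ℕ) < k), x i := by
    rw [Finset.sum_image (fun a _ b _ h => Fin.val_injective h)]
    exact Finset.sum_congr rfl (fun i _ => by simp [extZ, i.isLt])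
  rw [← h1, image_filter_lt]
  refine Finset.sum_subset (Finset.range_subset_range.mpr (min_le_left k m)) ?_
  intro i hi hni
  simp only [Finset.mem_range, Nat.lt_min, not_and_or, not_lt] at hi hni
  rcases hni with h | h
  · omega
  · simp [extZ, Nat.not_lt.mpr h]

lemma topSum_eq_sum_image {m : ℕ} (x : Fin m → ℝ) (k : ℕ) :
    ∃ S : Finset (Fin m), S.card ≤ k ∧ topSum x k = ∑ i ∈ S, x i := by
  classical
  set σ : Equiv.Perm (Fin m) := Fin.revPerm.trans (Tuple.sort x) with hσ
  have hsd : ∀ i, sortDesc x i = x (σ i) := fun i => rfl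
  set T := Finset.univ.filter (fun i : Fin m => (i:ℕ) < k) with hT
  refine ⟨T.image σ, ?_, ?_⟩
  · rw [Finset.card_image_of_injective _ σ.injective]
    calc T.card = (T.image Fin.val).card :=
          (Finset.card_image_of_injective _ Fin.val_injective).symm
      _ = min k m := by rw [hT, image_filter_lt, Finset.card_range]
      _ ≤ k := min_le_left k m
  · rw [Finset.sum_image (fun a _ b _ h => σ.injective h)]
    exact Finset.sum_congr rfl (fun i _ => hsd i)

lemma sum_subset_le_top {m k : ℕ} (u : Fin m → ℝ) (hu0 : ∀ i, 0 ≤ u i) (hu : Antitone u)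
    (S : Finset (Fin m)) (hS : S.card ≤ k) :
    ∑ i ∈ S, u i ≤ ∑ i ∈ Finset.univ.filter (fun i : Fin m => (i:ℕ) < k), u i := by
  classical
  set T := Finset.univ.filter (fun i : Fin m => (i:ℕ) < k) with hT
  have hTcard : T.card = min k m := by
    rw [← Finset.card_image_of_injective _ Fin.val_injective, hT, image_filter_lt,
      Finset.card_range]
  have hSm : S.card ≤ m := by simpa using Finset.card_le_card (Finset.subset_univ S)
  have h1 : (S ∩ T).card + (S \ T).card = S.card := Finset.card_inter_add_card_sdiff S T
  have h2 : (T ∩ S).card + (T \ S).card = T.card := Finset.card_inter_add_card_sdiff T S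
  have h3 : (S ∩ T).card = (T ∩ S).card := by rw [Finset.inter_comm]
  have hcard : (S \ T).card ≤ (T \ S).card := by omega
  obtain ⟨T', hT'sub, hT'card⟩ := Finset.exists_subset_card_eq hcard
  have e : {x // x ∈ S \ T} ≃ {x // x ∈ T'} := Finset.equivOfCardEq hT'card.symm
  have key : ∑ i ∈ S \ T, u i ≤ ∑ i ∈ T', u i := by
    rw [← Finset.sum_coe_sort (S \ T) u, ← Finset.sum_coe_sort T' u,
      ← Equiv.sum_comp e (fun x : {x // x ∈ T'} => u x)]
    apply Finset.sum_le_sum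
    intro x _
    apply hu
    have hx : k ≤ ((x : Fin m) : ℕ) := by
      have h := (Finset.mem_sdiff.mp x.2).2
      simp only [hT, Finset.mem_filter, Finset.mem_univ, true_and, not_lt] at h
      exact h
    have hex : ((e x : Fin m) : ℕ) < k := by
      have h := (Finset.mem_sdiff.mp (hT'sub (e x).2)).1
      simp only [hT, Finset.mem_filter, Finset.mem_univ, true_and] at h
      exact h
    exact Fin.le_def.mpr (by omega)
  calc ∑ i ∈ S, u i = ∑ i ∈ S ∩ T, u i + ∑ i ∈ S \ T, u i :=
        (Finset.sum_inter_add_sum_sdiff S T u).symm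
    _ ≤ ∑ i ∈ T ∩ S, u i + ∑ i ∈ T', u i := by rw [Finset.inter_comm]; linarith
    _ ≤ ∑ i ∈ T ∩ S, u i + ∑ i ∈ T \ S, u i :=
        add_le_add (le_refl _)
          (Finset.sum_le_sum_of_subset_of_nonneg hT'sub (fun i _ _ => hu0 i))
    _ = ∑ i ∈ T, u i := Finset.sum_inter_add_sum_sdiff T S u

lemma sqrt_tangent {a b : ℝ} (ha : 0 < a) (hb : 0 ≤ b) :
    Real.sqrt b ≤ Real.sqrt a + (b - a) * (1 / (2 * Real.sqrt a)) := by
  have hsa : 0 < Real.sqrt a := Real.sqrt_pos.mpr ha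
  have h2 : Real.sqrt a ^ 2 = a := Real.sq_sqrt ha.le
  have h3 : Real.sqrt b ^ 2 = b := Real.sq_sqrt hb
  rw [mul_one_div, ← sub_le_iff_le_add', le_div_iff₀ (by positivity)]
  nlinarith [sq_nonneg (Real.sqrt a - Real.sqrt b)]

lemma hlp_sqrt_nat (n : ℕ) (a b : ℕ → ℝ) (ha0 : ∀ i, 0 ≤ a i) (hb0 : ∀ i, 0 ≤ b i)
    (haa : Antitone a)
    (han : ∀ i, n ≤ i → a i = 0) (hbn : ∀ i, n ≤ i → b i = 0)
    (htot : ∑ i ∈ range n, a i = ∑ i ∈ range n, b i)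
    (hAB : ∀ k, ∑ i ∈ range k, a i ≤ ∑ i ∈ range k, b i) :
    ∑ i ∈ range n, Real.sqrt (b i) ≤ ∑ i ∈ range n, Real.sqrt (a i) := by
  classical
  set dd : ℕ → ℝ := fun k => if a k = 0 then 0 else 1 / (2 * Real.sqrt (a k)) with hdd
  -- partial sums stabilize after n
  have hAk : ∀ k, n ≤ k → ∑ i ∈ range k, a i = ∑ i ∈ range n, a i := by
    intro k hk
    refine (Finset.sum_subset (Finset.range_subset_range.mpr hk) ?_).symm
    intro i hi hni
    exact han i (by simp only [Finset.mem_range, not_lt] at hni; exact hni)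
  have hBk : ∀ k, n ≤ k → ∑ i ∈ range k, b i = ∑ i ∈ range n, b i := by
    intro k hk
    refine (Finset.sum_subset (Finset.range_subset_range.mpr hk) ?_).symm
    intro i hi hni
    exact hbn i (by simp only [Finset.mem_range, not_lt] at hni; exact hni)
  -- if a vanishes at k then a and b vanish from k on
  have hzero : ∀ k, a k = 0 → (∀ i, k ≤ i → a i = 0) ∧ (∀ i, k ≤ i → b i = 0) := by
    intro k hak
    have haz : ∀ i, k ≤ i → a i = 0 := fun i hi =>
      le_antisymm (hak ▸ haa hi) (ha0 i)
    refine ⟨haz, ?_⟩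
    by_cases hkn : n ≤ k
    · exact fun i hi => hbn i (le_trans hkn hi)
    · push_neg at hkn
      have hAeq : ∑ i ∈ range n, a i = ∑ i ∈ range k, a i := by
        refine (Finset.sum_subset (Finset.range_subset_range.mpr hkn.le) ?_).symm
        intro i hi hni
        exact haz i (by simp only [Finset.mem_range, not_lt] at hni; exact hni)
      have hBle : ∑ i ∈ range k, b i ≤ ∑ i ∈ range n, b i :=
        Finset.sum_le_sum_of_subset_of_nonneg (Finset.range_subset_range.mpr hkn.le)
          (fun i _ _ => hb0 i)
      have hBeq : ∑ i ∈ range k, b i = ∑ i ∈ range n, b i :=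
        le_antisymm hBle (by
          calc ∑ i ∈ range n, b i = ∑ i ∈ range k, a i := by rw [← htot, hAeq]
            _ ≤ ∑ i ∈ range k, b i := hAB k)
      have hIco : ∑ i ∈ Finset.Ico k n, b i = 0 := by
        have := Finset.sum_range_add_sum_Ico b hkn.le
        linarith [hBeq]
      have hb' : ∀ i ∈ Finset.Ico k n, b i = 0 := by
        intro i hi
        have := (Finset.sum_eq_zero_iff_of_nonneg (fun j _ => hb0 j)).mp hIco
        exact this i hi
      intro i hi
      by_cases hin : i < n
      · exact hb' i (Finset.mem_Ico.mpr ⟨hi, hin⟩)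
      · exact hbn i (by omega)
  have hdd0 : ∀ k, 0 ≤ dd k := by
    intro k
    simp only [hdd]
    split
    · exact le_refl 0
    · positivity
  have claim : ∀ j k, n ≤ k + j →
      ∑ i ∈ Finset.Ico k n, Real.sqrt (b i) ≤ ∑ i ∈ Finset.Ico k n, Real.sqrt (a i)
        + dd k * ((∑ i ∈ range k, a i) - ∑ i ∈ range k, b i) := by
    intro j
    induction j with
    | zero =>
      intro k hk
      simp only [Nat.add_zero] at hk
      rw [Finset.Ico_eq_empty (by omega), Finset.sum_empty, Finset.sum_empty,
        hAk k hk, hBk k hk, htot, sub_self, mul_zero, add_zero]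
    | succ j ih =>
      intro k hk
      by_cases hkn : n ≤ k
      · rw [Finset.Ico_eq_empty (by omega), Finset.sum_empty, Finset.sum_empty,
          hAk k hkn, hBk k hkn, htot, sub_self, mul_zero, add_zero]
      push_neg at hkn
      have hP := ih (k + 1) (by omega)
      by_cases hak : a k = 0
      · obtain ⟨haz, hbz⟩ := hzero k hak
        have h1 : ∑ i ∈ Finset.Ico k n, Real.sqrt (b i) = 0 :=
          Finset.sum_eq_zero (fun i hi => by
            rw [hbz i (Finset.mem_Ico.mp hi).1, Real.sqrt_zero])
        have h2 : ∑ i ∈ Finset.Ico k n, Real.sqrt (a i) = 0 :=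
          Finset.sum_eq_zero (fun i hi => by
            rw [haz i (Finset.mem_Ico.mp hi).1, Real.sqrt_zero])
        have h3 : dd k = 0 := by simp [hdd, hak]
        rw [h1, h2, h3, zero_mul, add_zero]
      · have hak' : 0 < a k := lt_of_le_of_ne (ha0 k) (Ne.symm hak)
        have hddk : dd k = 1 / (2 * Real.sqrt (a k)) := by simp [hdd, hak]
        have hsplitb := Finset.sum_eq_sum_Ico_succ_bot hkn (fun i => Real.sqrt (b i))
        have hsplita := Finset.sum_eq_sum_Ico_succ_bot hkn (fun i => Real.sqrt (a i))
        have htan : Real.sqrt (b k) ≤ Real.sqrt (a k) + (b k - a k) * dd k := by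
          rw [hddk]; exact sqrt_tangent hak' (hb0 k)
        have hmono : dd (k+1) * ((∑ i ∈ range (k+1), a i) - ∑ i ∈ range (k+1), b i)
            ≤ dd k * ((∑ i ∈ range (k+1), a i) - ∑ i ∈ range (k+1), b i) := by
          by_cases ha1 : a (k+1) = 0
          · obtain ⟨haz, hbz⟩ := hzero (k+1) ha1
            have hAeq : ∑ i ∈ range n, a i = ∑ i ∈ range (k+1), a i := by
              refine (Finset.sum_subset (Finset.range_subset_range.mpr (by omega)) ?_).symm
              intro i hi hni
              exact haz i (by simp only [Finset.mem_range, not_lt] at hni; exact hni)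
            have hBeq : ∑ i ∈ range n, b i = ∑ i ∈ range (k+1), b i := by
              refine (Finset.sum_subset (Finset.range_subset_range.mpr (by omega)) ?_).symm
              intro i hi hni
              exact hbz i (by simp only [Finset.mem_range, not_lt] at hni; exact hni)
            have : (∑ i ∈ range (k+1), a i) - ∑ i ∈ range (k+1), b i = 0 := by
              rw [← hAeq, ← hBeq, htot, sub_self]
            rw [this, mul_zero, mul_zero]
          · have ha1' : 0 < a (k+1) := lt_of_le_of_ne (ha0 (k+1)) (Ne.symm ha1)
            have hdle : dd k ≤ dd (k+1) := by
              rw [hddk]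
              simp only [hdd, if_neg ha1]
              apply one_div_le_one_div_of_le
              · positivity
              · have := Real.sqrt_le_sqrt (haa (Nat.le_succ k) : a (k+1) ≤ a k)
                linarith
            exact mul_le_mul_of_nonpos_right hdle (by linarith [hAB (k+1)])
        have hstep : ∑ i ∈ range (k+1), a i = (∑ i ∈ range k, a i) + a k :=
          Finset.sum_range_succ a k
        have hstepb : ∑ i ∈ range (k+1), b i = (∑ i ∈ range k, b i) + b k :=
          Finset.sum_range_succ b k
        have key : (b k - a k) * dd k
              + dd k * ((∑ i ∈ range (k+1), a i) - ∑ i ∈ range (k+1), b i)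
            = dd k * ((∑ i ∈ range k, a i) - ∑ i ∈ range k, b i) := by
          rw [hstep, hstepb]; ring
        rw [hsplitb, hsplita]
        linarith [htan, hP, hmono, key]
  have h0 := claim n 0 (by omega)
  simpa [← Finset.range_eq_Ico] using h0

lemma sqrt_schur {m : ℕ} (a b : Fin m → ℝ) (ha : IsProbVec a) (hb : IsProbVec b)
    (hab : Maj a b) : ∑ k, Real.sqrt (b k) ≤ ∑ k, Real.sqrt (a k) := by
  classical
  set A : ℕ → ℝ := extZ (sortDesc a) with hA
  set B : ℕ → ℝ := extZ (sortDesc b) with hB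
  have hsa0 : ∀ i, 0 ≤ sortDesc a i := fun i => ha.1 _
  have hsb0 : ∀ i, 0 ≤ sortDesc b i := fun i => hb.1 _
  have hA0 : ∀ i, 0 ≤ A i := by
    intro i; simp only [hA, extZ]; split
    · exact hsa0 _
    · exact le_refl 0
  have hB0 : ∀ i, 0 ≤ B i := by
    intro i; simp only [hB, extZ]; split
    · exact hsb0 _
    · exact le_refl 0
  have hAanti : Antitone A := by
    intro i j hij
    simp only [hA, extZ]
    by_cases hj : j < m
    · have hi : i < m := lt_of_le_of_lt hij hj
      rw [dif_pos hi, dif_pos hj]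
      exact sortDesc_antitone' a (by exact Fin.mk_le_mk.mpr hij)
    · rw [dif_neg hj]
      split
      · exact hsa0 _
      · exact le_refl 0
  have hAn : ∀ i, m ≤ i → A i = 0 := fun i hi => by
    simp [hA, extZ, Nat.not_lt.mpr hi]
  have hBn : ∀ i, m ≤ i → B i = 0 := fun i hi => by
    simp [hB, extZ, Nat.not_lt.mpr hi]
  have hsumA : ∑ i ∈ Finset.range m, A i = 1 := by
    rw [← Fin.sum_univ_eq_sum_range]
    have : ∀ i : Fin m, A (i : ℕ) = sortDesc a i := fun i => by
      simp [hA, extZ, i.isLt]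
    rw [Finset.sum_congr rfl (fun i _ => this i)]
    rw [show ∑ i, sortDesc a i = ∑ i, a i from sum_comp_sortDesc a id]
    exact ha.2
  have hsumB : ∑ i ∈ Finset.range m, B i = 1 := by
    rw [← Fin.sum_univ_eq_sum_range]
    have : ∀ i : Fin m, B (i : ℕ) = sortDesc b i := fun i => by
      simp [hB, extZ, i.isLt]
    rw [Finset.sum_congr rfl (fun i _ => this i)]
    rw [show ∑ i, sortDesc b i = ∑ i, b i from sum_comp_sortDesc b id]
    exact hb.2
  have hAB : ∀ k, ∑ i ∈ Finset.range k, A i ≤ ∑ i ∈ Finset.range k, B i := by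
    intro k
    have := hab k
    rwa [topSum, topSum, psum_eq (sortDesc a) k, psum_eq (sortDesc b) k] at this
  have main := hlp_sqrt_nat m A B hA0 hB0 hAanti hAn hBn (by rw [hsumA, hsumB]) hAB
  have hconvA : ∑ i ∈ Finset.range m, Real.sqrt (A i) = ∑ k, Real.sqrt (a k) := by
    rw [← Fin.sum_univ_eq_sum_range]
    have : ∀ i : Fin m, Real.sqrt (A (i : ℕ)) = Real.sqrt (sortDesc a i) := fun i => by
      simp [hA, extZ, i.isLt]
    rw [Finset.sum_congr rfl (fun i _ => this i)]
    exact sum_comp_sortDesc a Real.sqrt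
  have hconvB : ∑ i ∈ Finset.range m, Real.sqrt (B i) = ∑ k, Real.sqrt (b k) := by
    rw [← Fin.sum_univ_eq_sum_range]
    have : ∀ i : Fin m, Real.sqrt (B (i : ℕ)) = Real.sqrt (sortDesc b i) := fun i => by
      simp [hB, extZ, i.isLt]
    rw [Finset.sum_congr rfl (fun i _ => this i)]
    exact sum_comp_sortDesc b Real.sqrt
  rw [← hconvA, ← hconvB]
  exact main

end Aux

/-- The greedy filling `v̂` of a descending cap vector `u` with
`∑ u ≥ 1` belongs to `R = {v : ∑v = 1, 0 ≤ v ≤ u}`, is descending, and is the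
majorization join (greatest element) of `R`; hence every Schur-concave `g` attains
its minimum over `R` at `v̂`; in particular so does `v ↦ ∑ √vₖ`. -/
theorem stmt14 {m : ℕ} (u : Fin m → ℝ) (hu0 : ∀ k, 0 ≤ u k)
    (hud : ∀ k l : Fin m, k ≤ l → u l ≤ u k) (hus : 1 ≤ ∑ k, u k)
    (R : Set (Fin m → ℝ))
    (hR : R = {v | (∑ k, v k) = 1 ∧ ∀ k, 0 ≤ v k ∧ v k ≤ u k})
    (M : ℕ) (hMm : M ≤ m)
    (hMle : ∑ l ∈ Finset.univ.filter (fun l : Fin m => (l : ℕ) < M), u l ≤ 1)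
    (hMmax : ∀ M' : ℕ, M' ≤ m →
      (∑ l ∈ Finset.univ.filter (fun l : Fin m => (l : ℕ) < M'), u l) ≤ 1 → M' ≤ M)
    (vh : Fin m → ℝ)
    (hvh : ∀ k : Fin m, vh k =
      if (k : ℕ) < M then u k
      else if (k : ℕ) = M then
        1 - ∑ l ∈ Finset.univ.filter (fun l : Fin m => (l : ℕ) < M), u l
      else 0) :
    vh ∈ R ∧ (∀ k l : Fin m, k ≤ l → vh l ≤ vh k) ∧
    (∀ v ∈ R, Maj v vh) ∧
    (∀ c, IsProbVec c → (∀ v ∈ R, Maj v c) → Maj vh c) ∧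
    (∀ g : (Fin m → ℝ) → ℝ,
      (∀ a b : Fin m → ℝ, IsProbVec a → IsProbVec b → Maj a b → g b ≤ g a) →
      IsLeast (g '' R) (g vh)) ∧
    IsLeast ((fun v => ∑ k, Real.sqrt (v k)) '' R) (∑ k, Real.sqrt (vh k)) := by
  classical
  set s : ℝ := ∑ l ∈ Finset.univ.filter (fun l : Fin m => (l : ℕ) < M), u l with hs
  have hvh0 : ∀ k, 0 ≤ vh k := by
    intro k
    rw [hvh k]
    split
    · exact hu0 k
    split
    · linarith [hMle]
    · exact le_refl 0
  have hvhu : ∀ k, vh k ≤ u k := by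
    intro k
    rw [hvh k]
    split
    · exact le_refl _
    rename_i h1
    split
    · rename_i h2
      have hMm' : M < m := h2 ▸ k.isLt
      have hins : Finset.univ.filter (fun i : Fin m => (i:ℕ) < M + 1)
          = insert k (Finset.univ.filter (fun i : Fin m => (i:ℕ) < M)) := by
        ext i
        simp only [Finset.mem_filter, Finset.mem_univ, true_and, Finset.mem_insert,
          Fin.ext_iff, h2]
        omega
      have hknot : k ∉ Finset.univ.filter (fun i : Fin m => (i:ℕ) < M) := by
        simp [h2]
      have hsum1 : ∑ l ∈ Finset.univ.filter (fun l : Fin m => (l:ℕ) < M + 1), u l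
          = u k + s := by rw [hins, Finset.sum_insert hknot, hs]
      have hgt : ¬ (∑ l ∈ Finset.univ.filter (fun l : Fin m => (l:ℕ) < M + 1), u l ≤ 1) := by
        intro hle
        have := hMmax (M+1) (by omega) hle
        omega
      rw [hsum1] at hgt
      push_neg at hgt
      linarith
    · exact hu0 k
  have hvhsum : ∑ i, vh i = 1 := by
    have hsplit := Finset.sum_filter_add_sum_filter_not Finset.univ
      (fun i : Fin m => (i:ℕ) < M) vh
    have h1 : ∑ i ∈ Finset.univ.filter (fun i : Fin m => (i:ℕ) < M), vh i = s := by
      rw [hs]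
      exact Finset.sum_congr rfl (fun i hi => by
        rw [hvh i, if_pos (Finset.mem_filter.mp hi).2])
    have h2 : ∑ i ∈ Finset.univ.filter (fun i : Fin m => ¬ (i:ℕ) < M), vh i
        = ∑ i ∈ Finset.univ.filter (fun i : Fin m => ¬ (i:ℕ) < M),
            (if (i:ℕ) = M then 1 - s else 0) :=
      Finset.sum_congr rfl (fun i hi => by
        rw [hvh i, if_neg (Finset.mem_filter.mp hi).2])
    have h3 : ∑ i ∈ Finset.univ.filter (fun i : Fin m => ¬ (i:ℕ) < M),
            (if (i:ℕ) = M then 1 - s else 0)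
        = ∑ i ∈ (Finset.univ.filter (fun i : Fin m => ¬ (i:ℕ) < M)).filter
            (fun i : Fin m => (i:ℕ) = M), (1 - s) := (Finset.sum_filter _ _).symm
    have h4 : (Finset.univ.filter (fun i : Fin m => ¬ (i:ℕ) < M)).filter
            (fun i : Fin m => (i:ℕ) = M)
        = Finset.univ.filter (fun i : Fin m => (i:ℕ) = M) := by
      rw [Finset.filter_filter]
      ext i
      simp only [Finset.mem_filter, Finset.mem_univ, true_and]
      omega
    by_cases hMm' : M < m
    · have h5 : Finset.univ.filter (fun i : Fin m => (i:ℕ) = M) = {(⟨M, hMm'⟩ : Fin m)} := by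
        ext i
        simp [Fin.ext_iff]
      rw [h2, h3, h4, h5, Finset.sum_singleton] at hsplit
      rw [h1] at hsplit
      linarith
    · have hMm'' : M = m := le_antisymm hMm (Nat.not_lt.mp hMm')
      have h5 : Finset.univ.filter (fun i : Fin m => (i:ℕ) = M) = (∅ : Finset (Fin m)) := by
        ext i
        simp only [Finset.mem_filter, Finset.mem_univ, true_and, Finset.notMem_empty,
          iff_false]
        have := i.isLt
        omega
      rw [h2, h3, h4, h5, Finset.sum_empty, add_zero, h1] at hsplit
      have h6 : Finset.univ.filter (fun i : Fin m => (i:ℕ) < M) = (Finset.univ : Finset (Fin m)) := by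
        ext i
        simp only [Finset.mem_filter, Finset.mem_univ, true_and, iff_true]
        have := i.isLt
        omega
      have h7 : s = ∑ i, u i := by rw [hs, h6]
      have h8 : s ≤ 1 := by rw [hs]; exact hMle
      have h9 : 1 ≤ s := by rw [h7]; exact hus
      rw [← hsplit]
      linarith
  have hvhR : vh ∈ R := by
    rw [hR]
    exact ⟨hvhsum, fun k => ⟨hvh0 k, hvhu k⟩⟩
  have hvhanti : ∀ k l : Fin m, k ≤ l → vh l ≤ vh k := by
    intro k l hkl
    by_cases hk : (k:ℕ) < M
    · calc vh l ≤ u l := hvhu l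
        _ ≤ u k := hud k l hkl
        _ = vh k := by rw [hvh k, if_pos hk]
    · by_cases hlM : (l:ℕ) = M
      · have hkM' : (k:ℕ) = M := by have := Fin.le_def.mp hkl; omega
        have hkl' : k = l := Fin.ext (by omega)
        rw [hkl']
      · have hl : ¬ (l:ℕ) < M := by have := Fin.le_def.mp hkl; omega
        rw [hvh l, if_neg hl, if_neg hlM]
        exact hvh0 k
  have hvhanti' : Antitone vh := fun k l h => hvhanti k l h
  have hmaj : ∀ v ∈ R, Maj v vh := by
    intro v hv k
    rw [hR] at hv
    obtain ⟨hvsum, hvb⟩ := hv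
    obtain ⟨S, hScard, hSsum⟩ := topSum_eq_sum_image v k
    rw [hSsum, topSum_of_antitone hvhanti' k]
    by_cases hkM : k ≤ M
    · have h1 : ∑ i ∈ Finset.univ.filter (fun i : Fin m => (i:ℕ) < k), vh i
          = ∑ i ∈ Finset.univ.filter (fun i : Fin m => (i:ℕ) < k), u i :=
        Finset.sum_congr rfl (fun i hi => by
          rw [hvh i, if_pos (lt_of_lt_of_le (Finset.mem_filter.mp hi).2 hkM)])
      rw [h1]
      calc ∑ i ∈ S, v i ≤ ∑ i ∈ S, u i := Finset.sum_le_sum (fun i _ => (hvb i).2)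
        _ ≤ _ := sum_subset_le_top u hu0 (fun i j h => hud i j h) S hScard
    · push_neg at hkM
      have h1 : ∑ i ∈ Finset.univ.filter (fun i : Fin m => (i:ℕ) < k), vh i = ∑ i, vh i := by
        refine Finset.sum_subset (Finset.subset_univ _) ?_
        intro i _ hni
        simp only [Finset.mem_filter, Finset.mem_univ, true_and, not_lt] at hni
        rw [hvh i, if_neg (by omega), if_neg (by omega)]
      rw [h1, hvhsum]
      calc ∑ i ∈ S, v i ≤ ∑ i, v i :=
            Finset.sum_le_sum_of_subset_of_nonneg (Finset.subset_univ S)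
              (fun i _ _ => (hvb i).1)
        _ = 1 := hvsum
  have hprob : ∀ v ∈ R, IsProbVec v := by
    intro v hv
    rw [hR] at hv
    exact ⟨fun i => (hv.2 i).1, hv.1⟩
  have h5 : ∀ g : (Fin m → ℝ) → ℝ,
      (∀ a b : Fin m → ℝ, IsProbVec a → IsProbVec b → Maj a b → g b ≤ g a) →
      IsLeast (g '' R) (g vh) := by
    intro g hg
    constructor
    · exact ⟨vh, hvhR, rfl⟩
    · rintro y ⟨v, hv, rfl⟩
      exact hg v vh (hprob v hv) (hprob vh hvhR) (hmaj v hv)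
  exact ⟨hvhR, hvhanti, hmaj, fun c hc hall => hall vh hvhR, h5,
    h5 (fun v => ∑ k, Real.sqrt (v k)) (fun a b ha hb hab => sqrt_schur a b ha hb hab)⟩
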